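/- Equivariance of the Set Attention Block: defining SAB(X) = MAB(X, X), for every X ∈ ℝ^{n×d} and every permutation σ of {1,…,n}, SAB(Π_σ X) = Π_σ SAB(X). -/

import Mathlib

open Matrix

/-- The `n × n` permutation matrix of `σ`: `(permMat σ * X) i j = X (σ i) j`,
i.e. row `i` of `Π_σ X` is row `σ(i)` of `X`. -/
noncomputable def permMat {n : ℕ} (σ : Equiv.Perm (Fin n)) : Matrix (Fin n) (Fin n) ℝ :=
  Matrix.of fun i j => if σ i = j then (1 : ℝ) else 0

/-- Row-wise softmax: `softmax M i j = exp (M i j) / ∑ k, exp (M i k)`. -/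
noncomputable def softmax {n m : ℕ} (M : Matrix (Fin n) (Fin m) ℝ) : Matrix (Fin n) (Fin m) ℝ :=
  Matrix.of fun i j => Real.exp (M i j) / ∑ k, Real.exp (M i k)

/-- Single-head attention: `Attn Q K V = softmax (Q Kᵀ / √d) ⬝ V`. -/
noncomputable def Attn {n m d : ℕ} (Q : Matrix (Fin n) (Fin d) ℝ)
    (K V : Matrix (Fin m) (Fin d) ℝ) : Matrix (Fin n) (Fin d) ℝ :=
  softmax ((1 / Real.sqrt d) • (Q * Kᵀ)) * V

/-- Apply a function `φ : ℝᵈ → ℝᵈ` independently to every row of a matrix. -/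
def rowMap {n d : ℕ} (φ : (Fin d → ℝ) → (Fin d → ℝ)) (X : Matrix (Fin n) (Fin d) ℝ) :
    Matrix (Fin n) (Fin d) ℝ :=
  Matrix.of fun i => φ (X i)

/-- Multihead Attention Block with row-wise maps `φ, ψ` (the LayerNorms) and `F`
(the feed-forward network): `MAB X Y = ψ(H + F(H))` where `H = φ(X + Attn(X, Y, Y))`. -/
noncomputable def MAB {n m d : ℕ} (φ ψ F : (Fin d → ℝ) → (Fin d → ℝ))
    (X : Matrix (Fin n) (Fin d) ℝ) (Y : Matrix (Fin m) (Fin d) ℝ) :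
    Matrix (Fin n) (Fin d) ℝ :=
  rowMap ψ (rowMap φ (X + Attn X Y Y) + rowMap F (rowMap φ (X + Attn X Y Y)))

/-- Set Attention Block: `SAB X = MAB X X`. -/
noncomputable def SAB {n d : ℕ} (φ ψ F : (Fin d → ℝ) → (Fin d → ℝ))
    (X : Matrix (Fin n) (Fin d) ℝ) : Matrix (Fin n) (Fin d) ℝ :=
  MAB φ ψ F X X

/-! `Π_σ X` is `X` with its rows reindexed by `σ`. Every ingredient of `MAB X Y` commutes with
reindexing the rows of `X`, and is unchanged when the rows of `Y` are permuted: the score matrix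
`X Yᵀ` gets its columns permuted, softmax normalises over all columns of a row, and that permutation
cancels against the one on the rows of `Y` in `softmax(…) · Y`. Taking `Y = X` gives the claim. -/

lemma permMat_eq_permMatrix {n : ℕ} (σ : Equiv.Perm (Fin n)) : permMat σ = σ.permMatrix ℝ := by
  ext i j
  simp [permMat, PEquiv.toMatrix_apply, eq_comm]

lemma permMat_mul {n : ℕ} {α : Type*} (σ : Equiv.Perm (Fin n)) (X : Matrix (Fin n) α ℝ) :
    permMat σ * X = X.submatrix σ id := by
  rw [permMat_eq_permMatrix, PEquiv.toMatrix_toPEquiv_mul]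

lemma softmax_submatrix {n n' m : ℕ} (M : Matrix (Fin n) (Fin m) ℝ) (e : Fin n' → Fin n)
    (τ : Equiv.Perm (Fin m)) : softmax (M.submatrix e τ) = (softmax M).submatrix e τ := by
  ext i j
  simp only [softmax, of_apply, submatrix_apply, Equiv.sum_comp τ (fun k => Real.exp (M (e i) k))]

lemma Attn_submatrix {n n' m d : ℕ} (Q : Matrix (Fin n) (Fin d) ℝ)
    (K V : Matrix (Fin m) (Fin d) ℝ) (e : Fin n' → Fin n) (τ : Equiv.Perm (Fin m)) :
    Attn (Q.submatrix e id) (K.submatrix τ id) (V.submatrix τ id) = (Attn Q K V).submatrix e id := by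
  have scores : Q.submatrix e id * (K.submatrix τ id)ᵀ = (Q * Kᵀ).submatrix e τ := by
    rw [transpose_submatrix, ← submatrix_mul_equiv Q Kᵀ e (Equiv.refl _) τ]
    rfl
  have scaled (c : ℝ) : c • (Q * Kᵀ).submatrix e τ = (c • (Q * Kᵀ)).submatrix e τ := rfl
  rw [Attn, Attn, scores, scaled, softmax_submatrix, submatrix_mul_equiv]

lemma MAB_submatrix {n n' m d : ℕ} (φ ψ F : (Fin d → ℝ) → (Fin d → ℝ))
    (X : Matrix (Fin n) (Fin d) ℝ) (Y : Matrix (Fin m) (Fin d) ℝ) (e : Fin n' → Fin n)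
    (τ : Equiv.Perm (Fin m)) :
    MAB φ ψ F (X.submatrix e id) (Y.submatrix τ id) = (MAB φ ψ F X Y).submatrix e id := by
  rw [MAB, Attn_submatrix]
  -- reindexing rows commutes definitionally with `+` and with `rowMap`
  rfl

/-- The Set Attention Block is permutation-equivariant: `SAB (Π_σ X) = Π_σ (SAB X)`. -/
theorem SAB_equivariant {n d : ℕ} (φ ψ F : (Fin d → ℝ) → (Fin d → ℝ))
    (X : Matrix (Fin n) (Fin d) ℝ) (σ : Equiv.Perm (Fin n)) :
    SAB φ ψ F (permMat σ * X) = permMat σ * SAB φ ψ F X := by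
  rw [SAB, SAB, permMat_mul, permMat_mul, MAB_submatrix]
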